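/- (Theorem B, Sato–Tate angle form.) For every real λ > 0, under the tilted Sato–Tate weight on [0,π] the covariance of cos θ and cos 2θ is strictly positive: letting v_λ(θ) = sin²θ · e^{λ cos θ} on [0,π], Y(λ) = ∫_{0}^{π} v_λ(θ) dθ, Ẽ_λ[f] = Y(λ)⁻¹ ∫_{0}^{π} f(θ) v_λ(θ) dθ, one has Ẽ_λ[cos θ · cos 2θ] − Ẽ_λ[cos θ]·Ẽ_λ[cos 2θ] > 0. -/

import Mathlib

open intervalIntegral

/-- The exponentially tilted Sato--Tate weight on `[0, π]`. -/
noncomputable def tiltV (lam θ : ℝ) : ℝ := (Real.sin θ) ^ 2 * Real.exp (lam * Real.cos θ)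

/-- The normalization constant `Y(λ)`. -/
noncomputable def tiltY (lam : ℝ) : ℝ := ∫ θ in (0 : ℝ)..Real.pi, tiltV lam θ

/-- The mean `Ẽ_λ[f]` under the tilted Sato--Tate measure. -/
noncomputable def tiltEst (lam : ℝ) (f : ℝ → ℝ) : ℝ :=
  (tiltY lam)⁻¹ * ∫ θ in (0 : ℝ)..Real.pi, f θ * tiltV lam θ

/-!
Since `cos 2x - cos 2y = 2 (cos x - cos y)(cos x + cos y)`, the covariance equals, up to a positive
factor, the double integral of `(cos x - cos y)² (cos x + cos y)` against `v_λ(x) v_λ(y)`. The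
reflection `θ ↦ π - θ` changes the sign of `cos θ` and turns `v_λ` into `v_{-λ}`; averaging the
double integral with its reflection therefore replaces `e^{λ s}`, `s = cos x + cos y`, by
`sinh (λ s)`, and the integrand becomes `sin² x sin² y (cos x - cos y)² · s sinh (λ s) ≥ 0`,
which is positive at `(π/3, π/2)`.
-/

open Real Set

namespace intervalIntegral

variable {a b : ℝ}

theorem integral_integral_sub_mul_sub {w f g : ℝ → ℝ} (hw : Continuous w) (hf : Continuous f)
    (hg : Continuous g) :
    ∫ x in a..b, ∫ y in a..b, w x * w y * ((f x - f y) * (g x - g y)) =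
      2 * ((∫ x in a..b, w x) * (∫ x in a..b, f x * g x * w x) -
        (∫ x in a..b, f x * w x) * ∫ x in a..b, g x * w x) := by
  have inner : ∀ x, ∫ y in a..b, w x * w y * ((f x - f y) * (g x - g y)) =
      f x * g x * w x * (∫ y in a..b, w y) - g x * w x * (∫ y in a..b, f y * w y)
        - f x * w x * (∫ y in a..b, g y * w y) + w x * ∫ y in a..b, f y * g y * w y := by
    intro x
    rw [← integral_const_mul, ← integral_const_mul, ← integral_const_mul, ← integral_const_mul,
      ← integral_sub, ← integral_sub, ← integral_add]
    · exact integral_congr fun y _ => by ring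
    all_goals exact Continuous.intervalIntegrable (by fun_prop) a b
  simp only [inner]
  rw [integral_add, integral_sub, integral_sub, integral_mul_const, integral_mul_const,
    integral_mul_const, integral_mul_const]
  · ring
  all_goals exact Continuous.intervalIntegrable (by fun_prop) a b

theorem integral_comp_add_sub (F : ℝ → ℝ) : ∫ x in a..b, F (a + b - x) = ∫ x in a..b, F x := by
  rw [integral_comp_sub_left, add_sub_cancel_right, add_sub_cancel_left]

theorem integral_integral_add_comp_add_sub {G : ℝ → ℝ → ℝ}
    (hG : Continuous (Function.uncurry G)) :
    ∫ x in a..b, ∫ y in a..b, (G x y + G (a + b - x) (a + b - y)) =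
      2 * ∫ x in a..b, ∫ y in a..b, G x y := by
  have inner : ∀ x, ∫ y in a..b, (G x y + G (a + b - x) (a + b - y)) =
      (∫ y in a..b, G x y) + ∫ y in a..b, G (a + b - x) y := by
    intro x
    have hG' : Continuous fun y => G (a + b - x) (a + b - y) :=
      (hG.uncurry_left (a + b - x)).comp (continuous_sub_left (a + b))
    rw [integral_add ((hG.uncurry_left x).intervalIntegrable a b) (hG'.intervalIntegrable a b),
      integral_comp_add_sub (G (a + b - x))]
  simp only [inner]
  rw [integral_add, integral_comp_add_sub (fun x => ∫ y in a..b, G x y), two_mul]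
  all_goals refine Continuous.intervalIntegrable ?_ a b
  · exact continuous_parametric_intervalIntegral_of_continuous' hG a b
  · exact (continuous_parametric_intervalIntegral_of_continuous' hG a b).comp (by fun_prop)

theorem integral_integral_pos {G : ℝ → ℝ → ℝ} (hG : Continuous (Function.uncurry G))
    (hab : a < b) (hG_nonneg : ∀ x ∈ Icc a b, ∀ y ∈ Icc a b, 0 ≤ G x y) {x₀ y₀ : ℝ}
    (hx₀ : x₀ ∈ Icc a b) (hy₀ : y₀ ∈ Icc a b) (hG_pos : 0 < G x₀ y₀) :
    0 < ∫ x in a..b, ∫ y in a..b, G x y :=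
  integral_pos hab (continuous_parametric_intervalIntegral_of_continuous' hG a b).continuousOn
    (fun x hx => integral_nonneg hab.le (hG_nonneg x (Ioc_subset_Icc_self hx)))
    ⟨x₀, hx₀, integral_pos hab (hG.uncurry_left x₀).continuousOn
      (fun y hy => hG_nonneg x₀ hx₀ y (Ioc_subset_Icc_self hy)) ⟨y₀, hy₀, hG_pos⟩⟩

end intervalIntegral

theorem mul_sinh_mul_nonneg {lam : ℝ} (hlam : 0 ≤ lam) (s : ℝ) : 0 ≤ s * sinh (lam * s) := by
  rcases le_total 0 s with hs | hs
  · exact mul_nonneg hs (sinh_nonneg_iff.mpr (mul_nonneg hlam hs))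
  · exact mul_nonneg_of_nonpos_of_nonpos hs
      (sinh_nonpos_iff.mpr (mul_nonpos_of_nonneg_of_nonpos hlam hs))

theorem continuous_tiltV (lam : ℝ) : Continuous (tiltV lam) := by
  unfold tiltV; fun_prop

theorem tiltY_pos (lam : ℝ) : 0 < tiltY lam :=
  intervalIntegral_pos_of_pos_on ((continuous_tiltV lam).intervalIntegrable _ _)
    (fun θ hθ => by unfold tiltV; have := sin_pos_of_pos_of_lt_pi hθ.1 hθ.2; positivity) pi_pos

noncomputable def tiltCovKernel (lam x y : ℝ) : ℝ :=
  tiltV lam x * tiltV lam y * ((cos x - cos y) * (cos (2 * x) - cos (2 * y)))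

theorem tiltCovKernel_add_reflect (lam x y : ℝ) :
    tiltCovKernel lam x y + tiltCovKernel lam (π - x) (π - y) =
      4 * (sin x ^ 2 * sin y ^ 2 * (cos x - cos y) ^ 2) *
        ((cos x + cos y) * sinh (lam * (cos x + cos y))) := by
  simp only [tiltCovKernel, tiltV, cos_pi_sub, sin_pi_sub, cos_two_mul, sinh_eq, mul_add,
    exp_add, exp_neg, mul_neg]
  field_simp
  ring

theorem integral_integral_tiltCovKernel_pos {lam : ℝ} (hlam : 0 < lam) :
    0 < ∫ x in (0 : ℝ)..π, ∫ y in (0 : ℝ)..π, tiltCovKernel lam x y := by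
  have hsym := integral_integral_add_comp_add_sub (a := 0) (b := π) (G := tiltCovKernel lam)
    (by unfold tiltCovKernel tiltV; fun_prop)
  simp only [zero_add, tiltCovKernel_add_reflect] at hsym
  have hpos := integral_integral_pos (a := 0) (b := π)
    (G := fun x y => 4 * (sin x ^ 2 * sin y ^ 2 * (cos x - cos y) ^ 2) *
        ((cos x + cos y) * sinh (lam * (cos x + cos y)))) (by fun_prop) pi_pos
    (fun x _ y _ => mul_nonneg (by positivity) (mul_sinh_mul_nonneg hlam.le _))
    (x₀ := π / 3) (y₀ := π / 2) ⟨by positivity, by linarith [pi_pos]⟩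
    ⟨by positivity, by linarith [pi_pos]⟩
    (by simp only [cos_pi_div_three, sin_pi_div_three, cos_pi_div_two, sin_pi_div_two]
        have := sinh_pos_iff.mpr (by positivity : 0 < lam * (1 / 2 + 0))
        positivity)
  linarith

theorem tiltCov_cos_cos2_pos (lam : ℝ) (hlam : 0 < lam) :
    0 < tiltEst lam (fun θ => Real.cos θ * Real.cos (2 * θ)) -
        tiltEst lam (fun θ => Real.cos θ) * tiltEst lam (fun θ => Real.cos (2 * θ)) := by
  have hY := tiltY_pos lam
  have hcov := integral_integral_sub_mul_sub (a := 0) (b := π) (continuous_tiltV lam)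
    continuous_cos (by fun_prop : Continuous fun θ => cos (2 * θ))
  have hK := integral_integral_tiltCovKernel_pos hlam
  unfold tiltCovKernel at hK
  unfold tiltEst
  rw [← tiltY] at hcov
  set P := ∫ θ in (0 : ℝ)..π, cos θ * cos (2 * θ) * tiltV lam θ
  set F := ∫ θ in (0 : ℝ)..π, cos θ * tiltV lam θ
  set G := ∫ θ in (0 : ℝ)..π, cos (2 * θ) * tiltV lam θ
  calc (0 : ℝ) < (tiltY lam * P - F * G) / tiltY lam ^ 2 := div_pos (by linarith) (by positivity)
    _ = (tiltY lam)⁻¹ * P - (tiltY lam)⁻¹ * F * ((tiltY lam)⁻¹ * G) := by field_simp
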